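/- (Main theorem) For every time-series distribution ρ on {0,1}^∞ there exists a measure μ ∈ S⁺ with d(μ, ρ) ≥ 1, where S⁺ is the set of measures μ for which some stationary ergodic measure ν satisfies d(μ, ν) = 0. In particular, no predictor is universally consistent on S⁺. -/

import Mathlib

open MeasureTheory Filter
open scoped ENNReal

/-- The shift on infinite binary sequences. -/
def shift : (ℕ → Bool) → (ℕ → Bool) := fun y n => y (n + 1)

/-- Probability of the cylinder set of the finite word `w`. -/
noncomputable def cyl (μ : Measure (ℕ → Bool)) (w : List Bool) : ℝ :=
  (μ {y : ℕ → Bool | ∀ i : Fin w.length, y (i : ℕ) = w.get i}).toReal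

/-- One summand of the KL divergence between the distributions induced on
length-`n` words, with the conventions `0 · log(0/q) = 0` and
`p · log(p/0) = ∞` for `p > 0`. -/
noncomputable def klTerm (μ ρ : Measure (ℕ → Bool)) (w : List Bool) : EReal :=
  if cyl μ w = 0 then 0
  else if cyl ρ w = 0 then ⊤
  else ((cyl μ w * Real.logb 2 (cyl μ w / cyl ρ w) : ℝ) : EReal)

/-- Cumulative KL divergence `d_n(μ, ρ) = E_μ[log₂(μ(x_{1..n})/ρ(x_{1..n}))]`. -/
noncomputable def dn (μ ρ : Measure (ℕ → Bool)) (n : ℕ) : EReal :=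
  ∑ w : Fin n → Bool, klTerm μ ρ (List.ofFn w)

/-- Expected average KL divergence `d(μ, ρ) = liminf (1/n) d_n(μ, ρ)`. -/
noncomputable def dKL (μ ρ : Measure (ℕ → Bool)) : EReal :=
  liminf (fun n : ℕ => ((((n : ℝ))⁻¹ : ℝ) : EReal) * dn μ ρ n) atTop

/-!
Take `μ = δ_x` for a sequence `x` built greedily against `ρ`: each next bit is the one whose
cylinder has the smaller `ρ`-mass, so `ρ(x_{1..n}) ≤ 2^{-n}` and `d(δ_x, ρ) ≥ 1`.

For `ν`, let independent blocks of fair coin flips encode lengths `L = 2^g`, where `g` has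
probability about `4^{-g}`. Reading the blocks as sitting at times `u ∈ ℕ`, the block at `u`
replays `x_0 … x_{L-1}` on `[u - L, u)`, and time `t` is read off the first renewal `s > t`,
a time that no later block reaches back across. This process is a factor of a Bernoulli shift,
hence stationary and ergodic. With probability `2^{-O(log n)}` the block at `m = 2^{⌊log₂ n⌋+1}`
has length `m` and `m` is a renewal, and then the process begins with `x_0 … x_{n-1}`. Thus
`ν(x_{1..n}) ≥ 2^{-O(log n)}` and `d(δ_x, ν) = 0`.
-/

open scoped ENNReal Topology

def cylSet (w : List Bool) : Set (ℕ → Bool) := {y | ∀ i : Fin w.length, y i = w.get i}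

lemma mem_cylSet_iff {w : List Bool} {y : ℕ → Bool} :
    y ∈ cylSet w ↔ ∀ i (h : i < w.length), y i = w[i] := Fin.forall_iff

lemma mem_cylSet_append {w : List Bool} {b : Bool} {y : ℕ → Bool} :
    y ∈ cylSet (w ++ [b]) ↔ y ∈ cylSet w ∧ y w.length = b := by
  simp only [mem_cylSet_iff, List.length_append, List.length_singleton]
  refine ⟨fun h => ⟨fun i hi => ?_, by simpa using h w.length (by omega)⟩, fun ⟨h1, h2⟩ i hi => ?_⟩
  · simpa [List.getElem_append_left hi] using h i (by omega)
  · rcases Nat.lt_succ_iff_lt_or_eq.mp hi with hi | rfl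
    · simpa [List.getElem_append_left hi] using h1 i hi
    · simpa using h2

lemma mem_cylSet_ofFn {n : ℕ} {x y : ℕ → Bool} :
    y ∈ cylSet (List.ofFn fun i : Fin n => x i) ↔ ∀ i < n, y i = x i := by
  simp [mem_cylSet_iff]

lemma cyl_eq (μ : Measure (ℕ → Bool)) (w : List Bool) : cyl μ w = μ.real (cylSet w) := rfl

lemma measurableSet_cylSet (w : List Bool) : MeasurableSet (cylSet w) := by
  simp only [cylSet, Set.ofPred_forall]
  exact MeasurableSet.iInter fun i => measurableSet_eq_fun (measurable_pi_apply _) measurable_const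

lemma cyl_append_false_add_cyl_append_true (μ : Measure (ℕ → Bool)) [IsFiniteMeasure μ]
    (w : List Bool) : cyl μ (w ++ [false]) + cyl μ (w ++ [true]) = cyl μ w := by
  have hunion : cylSet w = cylSet (w ++ [false]) ∪ cylSet (w ++ [true]) := by
    ext y
    simp only [Set.mem_union, mem_cylSet_append]
    cases y w.length <;> simp
  have hdisj : Disjoint (cylSet (w ++ [false])) (cylSet (w ++ [true])) :=
    Set.disjoint_left.mpr fun y h1 h2 => by
      simpa [(mem_cylSet_append.mp h1).2] using (mem_cylSet_append.mp h2).2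
  rw [cyl_eq, cyl_eq, cyl_eq, hunion, measureReal_union hdisj (measurableSet_cylSet _)]

section Adversary

variable (ρ : Measure (ℕ → Bool))

noncomputable def lighterBit (w : List Bool) : Bool :=
  decide (cyl ρ (w ++ [true]) ≤ cyl ρ (w ++ [false]))

noncomputable def greedyWord : ℕ → List Bool
  | 0 => []
  | n + 1 => greedyWord n ++ [lighterBit ρ (greedyWord n)]

noncomputable def adversarialSeq (n : ℕ) : Bool := lighterBit ρ (greedyWord ρ n)

lemma greedyWord_eq_ofFn (n : ℕ) :
    greedyWord ρ n = List.ofFn fun i : Fin n => adversarialSeq ρ i := by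
  induction n with
  | zero => rfl
  | succ n ih =>
    simp only [greedyWord, List.ofFn_succ', List.concat_eq_append, Fin.val_castSucc, Fin.val_last,
      ← ih]
    rfl

lemma cyl_append_lighterBit_le [IsFiniteMeasure ρ] (w : List Bool) :
    cyl ρ (w ++ [lighterBit ρ w]) ≤ cyl ρ w / 2 := by
  have := cyl_append_false_add_cyl_append_true ρ w
  unfold lighterBit
  by_cases h : cyl ρ (w ++ [true]) ≤ cyl ρ (w ++ [false])
  · rw [decide_eq_true h]; linarith
  · rw [decide_eq_false h]; linarith

lemma cyl_adversarialSeq_le [IsProbabilityMeasure ρ] (n : ℕ) :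
    cyl ρ (List.ofFn fun i : Fin n => adversarialSeq ρ i) ≤ 2⁻¹ ^ n := by
  rw [← greedyWord_eq_ofFn]
  induction n with
  | zero => exact measureReal_le_one
  | succ n ih =>
    calc cyl ρ (greedyWord ρ (n + 1)) ≤ cyl ρ (greedyWord ρ n) / 2 :=
          cyl_append_lighterBit_le ρ _
      _ ≤ 2⁻¹ ^ (n + 1) := by rw [pow_succ]; linarith

end Adversary

section Dirac

variable (x : ℕ → Bool) (ρ : Measure (ℕ → Bool))

lemma cyl_dirac (w : List Bool) : cyl (Measure.dirac x) w = (cylSet w).indicator 1 x := by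
  rw [cyl_eq, measureReal_def, Measure.dirac_apply' _ (measurableSet_cylSet w)]
  by_cases h : x ∈ cylSet w <;> simp [h]

lemma dn_dirac (n : ℕ) :
    dn (Measure.dirac x) ρ n =
      if cyl ρ (List.ofFn fun i : Fin n => x i) = 0 then ⊤
      else ((-Real.logb 2 (cyl ρ (List.ofFn fun i : Fin n => x i)) : ℝ) : EReal) := by
  rw [dn, Fintype.sum_eq_single (fun i : Fin n => x i)]
  · rw [klTerm, cyl_dirac, Set.indicator_of_mem (mem_cylSet_ofFn.mpr fun _ _ => rfl)]
    simp [Real.logb_inv]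
  · intro f hf
    have hx : x ∉ cylSet (List.ofFn f) := fun h =>
      hf (funext fun i => by simpa using (mem_cylSet_iff.mp h i (by simp)).symm)
    rw [klTerm, cyl_dirac, Set.indicator_of_notMem hx]
    simp

end Dirac

section Divergence

lemma le_neg_logb_two_iff {c : ℝ} (hc : 0 < c) (k : ℕ) : k ≤ -Real.logb 2 c ↔ c ≤ 2⁻¹ ^ k := by
  rw [le_neg, Real.logb_le_iff_le_rpow one_lt_two hc, Real.rpow_neg zero_le_two,
    Real.rpow_natCast, inv_pow]

lemma neg_logb_two_le_iff {c : ℝ} (hc : 0 < c) (k : ℕ) : -Real.logb 2 c ≤ k ↔ 2⁻¹ ^ k ≤ c := by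
  rw [neg_le, Real.le_logb_iff_rpow_le one_lt_two hc, Real.rpow_neg zero_le_two,
    Real.rpow_natCast, inv_pow]

variable {x : ℕ → Bool}

lemma one_le_dKL_dirac {ρ : Measure (ℕ → Bool)}
    (h : ∀ n, cyl ρ (List.ofFn fun i : Fin n => x i) ≤ 2⁻¹ ^ n) :
    1 ≤ dKL (Measure.dirac x) ρ := by
  refine le_liminf_of_le (by isBoundedDefault) ?_
  filter_upwards [eventually_ge_atTop 1] with n hn
  have hn' : (0 : ℝ) < n := by exact_mod_cast hn
  rw [dn_dirac]
  split_ifs with h0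
  · rw [EReal.mul_top_of_pos (by exact_mod_cast inv_pos.mpr hn')]
    exact le_top
  · have hc : 0 < cyl ρ (List.ofFn fun i : Fin n => x i) :=
      lt_of_le_of_ne measureReal_nonneg (Ne.symm h0)
    have hlog := (le_neg_logb_two_iff hc n).mpr (h n)
    rw [← EReal.coe_mul, ← EReal.coe_one, EReal.coe_le_coe_iff]
    calc (1 : ℝ) = (n : ℝ)⁻¹ * n := (inv_mul_cancel₀ hn'.ne').symm
      _ ≤ _ := by gcongr

lemma dKL_dirac_eq_zero {ν : Measure (ℕ → Bool)} [IsProbabilityMeasure ν] (f : ℕ → ℕ)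
    (hf : Tendsto (fun n => (f n : ℝ) / n) atTop (𝓝 0))
    (h : ∀ n, 2⁻¹ ^ f n ≤ cyl ν (List.ofFn fun i : Fin n => x i)) :
    dKL (Measure.dirac x) ν = 0 := by
  set c : ℕ → ℝ := fun n => cyl ν (List.ofFn fun i : Fin n => x i)
  have hc : ∀ n, 0 < c n := fun n => lt_of_lt_of_le (by positivity) (h n)
  have hterm : ∀ n : ℕ, ((((n : ℝ))⁻¹ : ℝ) : EReal) * dn (Measure.dirac x) ν n =
      (((n : ℝ)⁻¹ * -Real.logb 2 (c n) : ℝ) : EReal) := fun n => by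
    rw [dn_dirac, if_neg (hc n).ne', EReal.coe_mul]
  have hlog_nonneg : ∀ n, 0 ≤ -Real.logb 2 (c n) := fun n => by
    simpa using (le_neg_logb_two_iff (hc n) 0).mpr measureReal_le_one
  refine Tendsto.liminf_eq ?_
  simp only [hterm]
  refine EReal.tendsto_coe.mpr (squeeze_zero (fun n => by have := hlog_nonneg n; positivity)
    (fun n => ?_) hf)
  rw [inv_mul_eq_div]
  gcongr
  exact (neg_logb_two_le_iff (hc n) _).mpr (h n)

end Divergence

lemma measurable_sInf_nat {α : Type*} [MeasurableSpace α] {p : ℕ → α → Prop}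
    (hp : ∀ n, MeasurableSet {a | p n a}) : Measurable fun a => sInf {n | p n a} := by
  classical
  let q : α → ℕ → Prop := fun a n => p n a ∨ ¬∃ k, p k a
  have hq : ∀ a, ∃ n, q a n := fun a => by
    by_cases h : ∃ k, p k a
    · exact ⟨h.choose, Or.inl h.choose_spec⟩
    · exact ⟨0, Or.inr h⟩
  have hex : MeasurableSet {a | ∃ k, p k a} := by
    simpa only [Set.ofPred_exists] using MeasurableSet.iUnion hp
  convert measurable_find hq fun n => (hp n).union hex.compl with a
  by_cases h : ∃ k, p k a
  · refine ((Nat.find_eq_iff _).mpr ⟨Or.inl (Nat.sInf_mem h), fun n hn => ?_⟩).symm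
    exact not_or.mpr ⟨Nat.notMem_of_lt_sInf hn, not_not.mpr h⟩
  · have hempty : {n | p n a} = ∅ := Set.eq_empty_of_forall_notMem fun n hn => h ⟨n, hn⟩
    exact (Nat.sInf_eq_zero.mpr (Or.inr hempty)).trans ((Nat.find_eq_zero _).mpr (Or.inr h)).symm

section BernoulliShift

open ProbabilityTheory

variable {E : Type*}

def seqShift (ω : ℕ → E) : ℕ → E := fun n => ω (n + 1)

lemma seqShift_iterate_apply (N : ℕ) (ω : ℕ → E) (n : ℕ) : seqShift^[N] ω n = ω (n + N) := by
  induction N generalizing ω with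
  | zero => rfl
  | succ N ih => rw [Function.iterate_succ_apply, ih]; rfl

variable [MeasurableSpace E]

lemma measurable_seqShift : Measurable (seqShift (E := E)) :=
  measurable_pi_lambda _ fun n => measurable_pi_apply (n + 1)

variable (μ : Measure E) [IsProbabilityMeasure μ]

lemma measurePreserving_seqShift :
    MeasurePreserving seqShift (Measure.infinitePi fun _ : ℕ => μ)
      (Measure.infinitePi fun _ : ℕ => μ) :=
  ⟨measurable_seqShift, Measure.map_infinitePi_infinitePi_of_inj (add_left_injective 1)⟩

/-- Kolmogorov's 0-1 law: a shift-invariant set is a tail event. -/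
theorem ergodic_seqShift : Ergodic seqShift (Measure.infinitePi fun _ : ℕ => μ) := by
  refine ⟨measurePreserving_seqShift μ, ⟨fun s hs hinv => ?_⟩⟩
  set coord : ℕ → MeasurableSpace (ℕ → E) := fun i => MeasurableSpace.comap (fun ω => ω i) ‹_›
  have htail : MeasurableSet[limsup coord atTop] s := by
    rw [limsup_eq_iInf_iSup_of_nat', MeasurableSpace.measurableSet_iInf]
    intro N
    have hiter : Measurable[⨆ i, coord (i + N)] (seqShift^[N]) := by
      refine @measurable_pi_lambda _ _ _ (⨆ i, coord (i + N)) _ _ fun n => ?_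
      simp only [seqShift_iterate_apply]
      exact (comap_measurable _).mono (le_iSup (fun i => coord (i + N)) n) le_rfl
    rw [← Function.IsFixedPt.preimage_iterate hinv N]
    exact hiter hs
  have hindep : iIndep coord (Measure.infinitePi fun _ : ℕ => μ) :=
    (iIndepFun_iff_iIndep _ _ _).mp
      (iIndepFun_infinitePi (X := fun _ x => x) fun _ => measurable_id)
  rw [eventuallyConst_set']
  rcases measure_zero_or_one_of_measurableSet_limsup_atTop
    (fun i => (measurable_pi_apply i).comap_le) hindep htail with h0 | h1
  · exact Or.inl (ae_eq_empty.mpr h0)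
  · exact Or.inr ((ae_eq_univ_iff_measure_eq hs.nullMeasurableSet).mpr (by simp [h1]))

end BernoulliShift

section Replay

variable {E : Type*} (L : E → ℕ)

def IsRenewal (s : ℕ) (ω : ℕ → E) : Prop := ∀ u, s < u → L (ω u) + s ≤ u

noncomputable def nextRenewal (ω : ℕ → E) : ℕ := sInf {s | 0 < s ∧ IsRenewal L s ω}

/-- The block ending at the next renewal time `r` has length `L`; the current time is position
`L - r` of that block, and the block replays `x` from its start. -/
noncomputable def replayHead (x : ℕ → Bool) (ω : ℕ → E) : Bool :=
  x (L (ω (nextRenewal L ω)) - nextRenewal L ω)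

noncomputable def replay (x : ℕ → Bool) (ω : ℕ → E) : ℕ → Bool :=
  fun t => replayHead L x (seqShift^[t] ω)

lemma replay_seqShift (x : ℕ → Bool) (ω : ℕ → E) :
    replay L x (seqShift ω) = shift (replay L x ω) :=
  funext fun t => congrArg (replayHead L x) (Function.iterate_succ_apply _ t ω).symm

lemma nextRenewal_seqShift_iterate {m t : ℕ} {ω : ℕ → E} (hL : L (ω m) = m)
    (hr : IsRenewal L m ω) (ht : t < m) : nextRenewal L (seqShift^[t] ω) = m - t := by
  refine IsLeast.csInf_eq ⟨⟨by omega, fun u hu => ?_⟩, fun s ⟨hs, hsr⟩ => ?_⟩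
  · have := hr (u + t) (by omega)
    rw [seqShift_iterate_apply]
    omega
  · by_contra! hlt
    have := hsr (m - t) hlt
    rw [seqShift_iterate_apply, Nat.sub_add_cancel ht.le, hL] at this
    omega

lemma replay_apply_of_isRenewal (x : ℕ → Bool) {m : ℕ} {ω : ℕ → E} (hL : L (ω m) = m)
    (hr : IsRenewal L m ω) {t : ℕ} (ht : t < m) : replay L x ω t = x t := by
  rw [replay, replayHead, nextRenewal_seqShift_iterate L hL hr ht, seqShift_iterate_apply,
    Nat.sub_add_cancel ht.le, hL, Nat.sub_sub_self ht.le]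

variable [MeasurableSpace E] {L}

lemma measurableSet_isRenewal (hL : Measurable L) (s : ℕ) :
    MeasurableSet {ω : ℕ → E | IsRenewal L s ω} := by
  simp only [IsRenewal, Set.ofPred_forall]
  refine MeasurableSet.iInter fun u => ?_
  by_cases hsu : s < u
  · have hu : Measurable fun ω : ℕ → E => L (ω u) := hL.comp (measurable_pi_apply u)
    simpa [hsu] using hu (MeasurableSet.of_discrete (s := {k | k + s ≤ u}))
  · simp [hsu]

lemma measurable_nextRenewal (hL : Measurable L) : Measurable (nextRenewal L) :=
  measurable_sInf_nat fun s => by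
    by_cases hs : 0 < s <;> simp [hs, measurableSet_isRenewal hL s]

lemma measurable_replay (hL : Measurable L) (x : ℕ → Bool) : Measurable (replay L x) := by
  have hhead : Measurable (replayHead L x) := by
    have : Measurable fun p : (ℕ → E) × ℕ => x (L (p.1 p.2) - p.2) :=
      measurable_from_prod_countable_left fun k =>
        (Measurable.of_discrete (f := x)).comp ((hL.comp (measurable_pi_apply k)).sub_const k)
    exact this.comp (measurable_id.prodMk (measurable_nextRenewal hL))
  exact measurable_pi_lambda _ fun t => hhead.comp (measurable_seqShift.iterate t)

variable (μ : Measure E) [IsProbabilityMeasure μ]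

lemma ergodic_map_replay (hL : Measurable L) (x : ℕ → Bool) :
    Ergodic shift ((Measure.infinitePi fun _ : ℕ => μ).map (replay L x)) :=
  ((measurable_replay hL x).measurePreserving _).ergodic_of_ergodic_semiconj (ergodic_seqShift μ)
    measurable_seqShift (replay_seqShift L x)

lemma infinitePi_inter_eval_preimage {i j : ℕ} (hij : i ≠ j) {S T : Set E} (hS : MeasurableSet S)
    (hT : MeasurableSet T) :
    Measure.infinitePi (fun _ : ℕ => μ) ({ω | ω i ∈ S} ∩ {ω | ω j ∈ T}) = μ S * μ T := by
  rw [← Measure.prod_prod, ← Measure.infinitePi_map_eval_prod (P := fun _ : ℕ => μ) hij,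
    Measure.map_apply (by fun_prop) (hS.prod hT)]
  rfl

/-- Union bound over the blocks `u = m + 1 + j` that could reach back past `m`, each independent of
the block at `m`. -/
lemma measure_isRenewal_ge (hL : Measurable L) (m : ℕ) :
    μ {e | L e = m} * (1 - ∑' j, μ {e | j + 1 < L e}) ≤
      Measure.infinitePi (fun _ : ℕ => μ) {ω | L (ω m) = m ∧ IsRenewal L m ω} := by
  set P := Measure.infinitePi fun _ : ℕ => μ
  have hSm : MeasurableSet {e | L e = m} := hL (measurableSet_singleton m)
  set A : Set (ℕ → E) := {ω | ω m ∈ {e | L e = m}}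
  set B : ℕ → Set (ℕ → E) := fun j => {ω | ω (m + 1 + j) ∈ {e | j + 1 < L e}}
  have hgood : A \ ⋃ j, B j ⊆ {ω | L (ω m) = m ∧ IsRenewal L m ω} := by
    rintro ω ⟨hA, hB⟩
    simp only [Set.mem_iUnion, not_exists, B, Set.mem_ofPred_eq, not_lt] at hB
    refine ⟨hA, fun u hu => ?_⟩
    have := hB (u - m - 1)
    rw [show m + 1 + (u - m - 1) = u by omega] at this
    omega
  have hbad : P (A ∩ ⋃ j, B j) ≤ μ {e | L e = m} * ∑' j, μ {e | j + 1 < L e} := by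
    rw [Set.inter_iUnion, ← ENNReal.tsum_mul_left]
    refine (measure_iUnion_le _).trans (ENNReal.tsum_le_tsum fun j => ?_)
    exact (infinitePi_inter_eval_preimage μ (show m ≠ m + 1 + j by omega) hSm (hL .of_discrete)).le
  have hA : P A = μ {e | L e = m} :=
    (measurePreserving_eval_infinitePi _ m).measure_preimage hSm.nullMeasurableSet
  calc μ {e | L e = m} * (1 - ∑' j, μ {e | j + 1 < L e})
      = P A - μ {e | L e = m} * ∑' j, μ {e | j + 1 < L e} := by
        rw [ENNReal.mul_sub fun _ _ => measure_ne_top _ _, mul_one, hA]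
    _ ≤ P (A \ ⋃ j, B j) := by
        rw [tsub_le_iff_left]
        exact (measure_le_inter_add_sdiff P A _).trans (add_le_add_left hbad _)
    _ ≤ _ := measure_mono hgood

lemma cyl_map_replay_ge (hL : Measurable L) (x : ℕ → Bool) {n m : ℕ} (hnm : n ≤ m) :
    (Measure.infinitePi (fun _ : ℕ => μ) {ω | L (ω m) = m ∧ IsRenewal L m ω}).toReal ≤
      cyl ((Measure.infinitePi fun _ : ℕ => μ).map (replay L x))
        (List.ofFn fun i : Fin n => x i) := by
  rw [cyl_eq, measureReal_def, Measure.map_apply (measurable_replay hL x) (measurableSet_cylSet _)]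
  refine ENNReal.toReal_mono (measure_ne_top _ _) (measure_mono fun ω ⟨hLm, hr⟩ => ?_)
  exact mem_cylSet_ofFn.mpr fun t ht => replay_apply_of_isRenewal L x hLm hr (by omega)

end Replay

section BlockLength

noncomputable def fairCoin : Measure Bool := (PMF.uniformOfFintype Bool).toMeasure

noncomputable def coinSeq : Measure (ℕ → Bool) := Measure.infinitePi fun _ => fairCoin

instance : IsProbabilityMeasure fairCoin := by unfold fairCoin; infer_instance

instance : IsProbabilityMeasure coinSeq := by unfold coinSeq; infer_instance

lemma coinSeq_pi (s : Finset ℕ) (c : ℕ → Bool) :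
    coinSeq (Set.pi s fun i => {c i}) = 2⁻¹ ^ s.card := by
  rw [coinSeq, Measure.infinitePi_pi (μ := fun _ => fairCoin)
    (mt := fun i _ => measurableSet_singleton (c i))]
  simp [fairCoin, PMF.uniformOfFintype_apply]

noncomputable def leadingTrues (b : ℕ → Bool) : ℕ := sInf {j | b j = false}

/-- Halving the number of leading `true`s makes the tails `P(blockLen > j) ≈ j⁻²` summable (with
`∑ j, P(blockLen > j + 1) ≤ 1 / 2`), while every length `2 ^ g` keeps probability `2^{-O(g)}`. -/
noncomputable def blockLen (b : ℕ → Bool) : ℕ := 2 ^ (leadingTrues b / 2)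

lemma measurable_leadingTrues : Measurable leadingTrues :=
  measurable_sInf_nat fun j => measurableSet_eq_fun (measurable_pi_apply j) measurable_const

lemma measurable_blockLen : Measurable blockLen :=
  (Measurable.of_discrete (f := fun k : ℕ => 2 ^ (k / 2))).comp measurable_leadingTrues

lemma coinSeq_blockLen_eq_ge (g : ℕ) : 2⁻¹ ^ (2 * g + 1) ≤ coinSeq {b | blockLen b = 2 ^ g} := by
  rw [← Finset.card_range (2 * g + 1), ← coinSeq_pi _ fun i => decide (i < 2 * g)]
  refine measure_mono fun b hb => ?_
  simp only [Set.mem_pi, Finset.mem_coe, Finset.mem_range, Set.mem_singleton_iff] at hb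
  have : leadingTrues b = 2 * g := by
    refine IsLeast.csInf_eq ⟨by simpa using hb (2 * g) (by omega), fun j hj => ?_⟩
    by_contra! h
    simp [hb j (by omega), h] at hj
  simp [blockLen, this]

lemma coinSeq_lt_blockLen_le (j : ℕ) :
    coinSeq {b | j + 1 < blockLen b} ≤ 4⁻¹ ^ (Nat.log 2 (j + 1) + 1) := by
  calc _ ≤ coinSeq (Set.pi (Finset.range (2 * (Nat.log 2 (j + 1) + 1))) fun _ => {true}) :=
        measure_mono fun b hb => ?_
    _ = _ := by rw [coinSeq_pi, Finset.card_range, pow_mul, ← ENNReal.inv_pow]; norm_num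
  have hlog := Nat.log_lt_of_lt_pow (by omega) hb
  simp only [Set.mem_pi, Finset.mem_coe, Finset.mem_range, Set.mem_singleton_iff]
  intro i hi
  by_contra h
  have := Nat.sInf_le (show i ∈ {j | b j = false} by simpa using h)
  rw [← leadingTrues] at this
  omega

lemma two_mul_four_inv : (2 : ℝ≥0∞) * 4⁻¹ = 2⁻¹ := by
  rw [show (4 : ℝ≥0∞) = 2 * 2 by norm_num, ENNReal.mul_inv (by simp) (by simp), ← mul_assoc,
    ENNReal.mul_inv_cancel two_ne_zero ENNReal.ofNat_ne_top, one_mul]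

lemma tsum_four_inv_pow_log_le : ∑' j : ℕ, (4⁻¹ : ℝ≥0∞) ^ (Nat.log 2 (j + 1) + 1) ≤ 2⁻¹ := by
  set h : ℕ → ℝ≥0∞ := fun k => if k = 0 then 0 else 4⁻¹ ^ (Nat.log 2 k + 1)
  have hanti : ∀ ⦃m n⦄, 0 < m → m ≤ n → h n ≤ h m := fun m n hm hmn => by
    simp only [h, if_neg hm.ne', if_neg (hm.trans_le hmn).ne']
    exact pow_le_pow_right_of_le_one' (by norm_num) (by gcongr)
  calc ∑' j : ℕ, (4⁻¹ : ℝ≥0∞) ^ (Nat.log 2 (j + 1) + 1) = h 0 + ∑' j, h (j + 1) := by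
        simp only [h, if_pos rfl, zero_add, Nat.add_one_ne_zero, if_false]
    _ = ∑' k, h k := (tsum_eq_zero_add' ENNReal.summable).symm
    _ ≤ h 0 + ∑' k : ℕ, 2 ^ k * h (2 ^ k) := ENNReal.le_tsum_condensed hanti
    _ = ∑' k : ℕ, 4⁻¹ * 2⁻¹ ^ k := by
        simp only [h, if_pos rfl, zero_add, pow_ne_zero _ two_ne_zero, if_false,
          Nat.log_pow one_lt_two]
        refine tsum_congr fun k => ?_
        rw [pow_succ, ← mul_assoc, ← mul_pow, two_mul_four_inv, mul_comm]
    _ = 2⁻¹ := by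
        rw [ENNReal.tsum_mul_left, ENNReal.tsum_geometric, ENNReal.one_sub_inv_two, inv_inv,
          mul_comm, two_mul_four_inv]

end BlockLength

lemma tendsto_natLog_div_atTop : Tendsto (fun n : ℕ => (Nat.log 2 n : ℝ) / n) atTop (𝓝 0) := by
  have hlog : Tendsto (fun n : ℕ => Real.log n / n / Real.log 2) atTop (𝓝 0) := by
    simpa using ((Real.isLittleO_log_id_atTop.tendsto_div_nhds_zero).comp
      tendsto_natCast_atTop_atTop).div_const (Real.log 2)
  refine squeeze_zero (fun n => by positivity) (fun n => ?_) hlog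
  rw [div_right_comm, Real.log_div_log]
  gcongr
  exact Real.natLog_le_logb n 2

lemma cyl_map_replay_blockLen_ge (x : ℕ → Bool) (n : ℕ) :
    2⁻¹ ^ (2 * Nat.log 2 n + 4) ≤
      cyl ((Measure.infinitePi fun _ : ℕ => coinSeq).map (replay blockLen x))
        (List.ofFn fun i : Fin n => x i) := by
  set g := Nat.log 2 n + 1
  have hsum : ∑' j, coinSeq {b | j + 1 < blockLen b} ≤ 2⁻¹ :=
    (ENNReal.tsum_le_tsum coinSeq_lt_blockLen_le).trans tsum_four_inv_pow_log_le
  have hgood : (2⁻¹ : ℝ≥0∞) ^ (2 * g + 2) ≤ Measure.infinitePi (fun _ : ℕ => coinSeq)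
      {ω | blockLen (ω (2 ^ g)) = 2 ^ g ∧ IsRenewal blockLen (2 ^ g) ω} :=
    calc (2⁻¹ : ℝ≥0∞) ^ (2 * g + 2) = 2⁻¹ ^ (2 * g + 1) * (1 - 2⁻¹) := by
          rw [ENNReal.one_sub_inv_two, pow_succ]
      _ ≤ coinSeq {b | blockLen b = 2 ^ g} * (1 - ∑' j, coinSeq {b | j + 1 < blockLen b}) := by
          gcongr
          exact coinSeq_blockLen_eq_ge g
      _ ≤ _ := measure_isRenewal_ge coinSeq measurable_blockLen _
  refine le_trans ?_ (cyl_map_replay_ge coinSeq measurable_blockLen x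
    (Nat.lt_pow_succ_log_self one_lt_two n).le)
  calc (2⁻¹ : ℝ) ^ (2 * Nat.log 2 n + 4) = ((2⁻¹ : ℝ≥0∞) ^ (2 * g + 2)).toReal := by
        simp [g, mul_add]
    _ ≤ _ := ENNReal.toReal_mono (measure_ne_top _ _) hgood

/-- Main theorem: for every time-series distribution `ρ` on
`{0,1}^∞` there is a measure `μ ∈ S⁺` (i.e. `d(μ, ν) = 0` for some stationary
ergodic `ν`) such that `d(μ, ρ) ≥ 1`; hence no predictor is universally
consistent on `S⁺`. -/
theorem stmt13 (ρ : Measure (ℕ → Bool)) [IsProbabilityMeasure ρ] :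
    ∃ μ : Measure (ℕ → Bool), IsProbabilityMeasure μ ∧
      (∃ ν : Measure (ℕ → Bool), IsProbabilityMeasure ν ∧
        MeasurePreserving shift ν ν ∧ Ergodic shift ν ∧ dKL μ ν = 0) ∧
      1 ≤ dKL μ ρ := by
  set x := adversarialSeq ρ
  set ν := (Measure.infinitePi fun _ : ℕ => coinSeq).map (replay blockLen x)
  have hν : IsProbabilityMeasure ν :=
    Measure.isProbabilityMeasure_map (measurable_replay measurable_blockLen x).aemeasurable
  have hergodic : Ergodic shift ν := ergodic_map_replay coinSeq measurable_blockLen x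
  have hlog : Tendsto (fun n : ℕ => ((2 * Nat.log 2 n + 4 : ℕ) : ℝ) / n) atTop (𝓝 0) := by
    simpa [add_div, mul_div_assoc] using
      (tendsto_natLog_div_atTop.const_mul 2).add (tendsto_const_div_atTop_nhds_zero_nat 4)
  refine ⟨Measure.dirac x, inferInstance,
    ⟨ν, hν, hergodic.toMeasurePreserving, hergodic,
      dKL_dirac_eq_zero _ hlog (cyl_map_replay_blockLen_ge x)⟩,
    one_le_dKL_dirac (cyl_adversarialSeq_le ρ)⟩
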